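/- arXiv:2405.16805 — 4 statements merged into one kernel-verified Lean document; each statement's English description precedes it below -/
import Mathlib

section
/- Let 0 < δ, φ, θ < 1 and integer D ≥ 2 satisfy both: (i) φ·(D·B)^{3/2} − D·B ≥ (1−θ)(1−φ)φδ where B = (1−θ)(1−φ)δ·ln(3/(θ(1−φ)δ))/ln(3/(θ(1−φ)φδ)); and (ii) D·B ≥ 3/2. Define δ_{r,1} = θ(1−φ)φ^{r−1}δ, δ_{r,2} = (1−θ)(1−φ)φ^{r−1}δ, D₁ = D, and D_{r+1} = ⌊ D_r^{3/2} √( δ_{r,2} ln(3/δ_{r,1}) / ln(3/δ_{r+1,1}) ) ⌋. Then for every r ≥ 1, the quantity E_r := D_r · δ_{r,2} · ln(3/δ_{r,1}) / ln(3/δ_{r+1,1}) satisfies E_{r+1} ≥ E_r and φ·E_r^{3/2} − E_r ≥ φ·δ_{r,2}·ln(3/δ_{r,1})/ln(3/δ_{r+1,1}). -/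
lemma rpow32 (x : ℝ) (hx : 0 ≤ x) : x ^ (3/2:ℝ) = x * Real.sqrt x := by
  rw [Real.sqrt_eq_rpow, ← Real.rpow_one_add' hx (by norm_num : (1:ℝ) + 1/2 ≠ 0)]
  norm_num

lemma mono_f (φ x₀ x c : ℝ) (hφ0 : 0 < φ) (hx0 : 0 < x₀) (hx : x₀ ≤ x) (hc : 0 < c)
    (h : φ * x₀ ^ (3/2:ℝ) - x₀ ≥ c) :
    φ * x ^ (3/2:ℝ) - x ≥ φ * x₀ ^ (3/2:ℝ) - x₀ := by
  have hxpos : 0 < x := lt_of_lt_of_le hx0 hx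
  rw [rpow32 x hxpos.le, rpow32 x₀ hx0.le] at *
  set a := Real.sqrt x with ha'
  set b := Real.sqrt x₀ with hb'
  have hb : 0 < b := Real.sqrt_pos.2 hx0
  have hab : b ≤ a := Real.sqrt_le_sqrt hx
  have hx2 : x = a * a := (Real.mul_self_sqrt hxpos.le).symm
  have hx02 : x₀ = b * b := (Real.mul_self_sqrt hx0.le).symm
  rw [hx2, hx02] at *
  have hφb : 1 < φ * b := by nlinarith
  have key : 0 ≤ φ * (a*a + a*b + b*b) - (a + b) := by nlinarith
  nlinarith [mul_nonneg (sub_nonneg.2 hab) key]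

lemma key_aux (Ds dv lv lv' y φ : ℝ)
    (h1' : φ * (dv * lv) * lv' ≤ (φ * (y * (dv * lv)) - Ds * dv * lv) * lv')
    (h2' : Ds * dv * lv * lv ≤ Ds * dv * lv * lv') :
    (Ds * dv * lv) * lv ≤ ((y - 1) * (φ * (dv * lv'))) * lv := by nlinarith



/-- `δ_{r,1} = θ(1−φ)φ^{r−1}δ`. -/
noncomputable def d1 (θ φ δ : ℝ) (r : ℕ) : ℝ := θ * (1 - φ) * φ ^ (r - 1) * δ

/-- `δ_{r,2} = (1−θ)(1−φ)φ^{r−1}δ`. -/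
noncomputable def d2 (θ φ δ : ℝ) (r : ℕ) : ℝ := (1 - θ) * (1 - φ) * φ ^ (r - 1) * δ

/-- The ratio `ln(3/δ_{r,1}) / ln(3/δ_{r+1,1})`. -/
noncomputable def lr (θ φ δ : ℝ) (r : ℕ) : ℝ :=
  Real.log (3 / d1 θ φ δ r) / Real.log (3 / d1 θ φ δ (r + 1))

theorem stmt_7
    (δ φ θ : ℝ) (hδ0 : 0 < δ) (hδ1 : δ < 1) (hφ0 : 0 < φ) (hφ1 : φ < 1)
    (hθ0 : 0 < θ) (hθ1 : θ < 1) (D : ℕ) (hD : 2 ≤ D)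
    (B : ℝ)
    (hB : B = (1 - θ) * (1 - φ) * δ * Real.log (3 / (θ * (1 - φ) * δ)) /
      Real.log (3 / (θ * (1 - φ) * φ * δ)))
    (hASS1 : φ * ((D : ℝ) * B) ^ (3 / 2 : ℝ) - (D : ℝ) * B ≥ (1 - θ) * (1 - φ) * φ * δ)
    (hASS2 : (D : ℝ) * B ≥ 3 / 2)
    (Dseq : ℕ → ℝ) (hD1 : Dseq 1 = D)
    (hrec : ∀ r : ℕ, 1 ≤ r → Dseq (r + 1) = (⌊Dseq r ^ (3 / 2 : ℝ) *
      Real.sqrt (d2 θ φ δ r * Real.log (3 / d1 θ φ δ r) /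
        Real.log (3 / d1 θ φ δ (r + 1)))⌋ : ℤ))
    :
    ∀ r : ℕ, 1 ≤ r →
      Dseq (r + 1) * d2 θ φ δ (r + 1) * lr θ φ δ (r + 1) ≥ Dseq r * d2 θ φ δ r * lr θ φ δ r ∧
      φ * (Dseq r * d2 θ φ δ r * lr θ φ δ r) ^ (3 / 2 : ℝ) -
        Dseq r * d2 θ φ δ r * lr θ φ δ r ≥ φ * (d2 θ φ δ r * lr θ φ δ r) := by
  have h1φ : 0 < 1 - φ := by linarith
  have h1θ : 0 < 1 - θ := by linarith
  have hd1pos : ∀ r : ℕ, 0 < d1 θ φ δ r := fun r => by unfold d1; positivity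
  have hd1lt : ∀ r : ℕ, d1 θ φ δ r < 1 := by
    intro r
    unfold d1
    have h1 : φ ^ (r-1) ≤ 1 := pow_le_one₀ hφ0.le hφ1.le
    have h2 : 0 < φ ^ (r-1) := pow_pos hφ0 _
    have hA : θ * (1-φ) < 1 := by nlinarith
    have hB2 : θ * (1-φ) * φ^(r-1) < 1 := by nlinarith [mul_pos hθ0 h1φ]
    nlinarith [mul_pos (mul_pos hθ0 h1φ) h2]
  have hd2pos : ∀ r : ℕ, 0 < d2 θ φ δ r := fun r => by unfold d2; positivity
  have hLgt1 : ∀ r : ℕ, 1 < Real.log (3 / d1 θ φ δ r) := by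
    intro r
    have h33 : (3:ℝ) ≤ 3 / d1 θ φ δ r := by
      rw [le_div_iff₀ (hd1pos r)]; nlinarith [hd1lt r, hd1pos r]
    have h3 : Real.exp 1 < 3 / d1 θ φ δ r := by
      have := Real.exp_one_lt_d9; linarith
    calc (1:ℝ) = Real.log (Real.exp 1) := (Real.log_exp 1).symm
    _ < Real.log (3 / d1 θ φ δ r) := Real.log_lt_log (Real.exp_pos 1) h3
  have hd1succ : ∀ r : ℕ, 1 ≤ r → d1 θ φ δ (r+1) = φ * d1 θ φ δ r := by
    intro r hr
    unfold d1
    rw [show r + 1 - 1 = (r - 1) + 1 by omega, pow_succ]; ring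
  have hd2succ : ∀ r : ℕ, 1 ≤ r → d2 θ φ δ (r+1) = φ * d2 θ φ δ r := by
    intro r hr
    unfold d2
    rw [show r + 1 - 1 = (r - 1) + 1 by omega, pow_succ]; ring
  have hlogφ : Real.log φ < 0 := Real.log_neg hφ0 hφ1
  have hLsucc : ∀ r : ℕ, 1 ≤ r →
      Real.log (3 / d1 θ φ δ (r+1)) = Real.log (3 / d1 θ φ δ r) - Real.log φ := by
    intro r hr
    rw [hd1succ r hr, show (3:ℝ) / (φ * d1 θ φ δ r) = (3 / d1 θ φ δ r) / φ by
      rw [div_div, mul_comm],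
      Real.log_div (ne_of_gt (div_pos (by norm_num) (hd1pos r))) (ne_of_gt hφ0)]
  have hlr_pos : ∀ r : ℕ, 0 < lr θ φ δ r := by
    intro r
    exact div_pos (by linarith [hLgt1 r]) (by linarith [hLgt1 (r+1)])
  have hlr_le1 : ∀ r : ℕ, 1 ≤ r → lr θ φ δ r ≤ 1 := by
    intro r hr
    unfold lr
    rw [div_le_one (by linarith [hLgt1 (r+1)])]
    rw [hLsucc r hr]; linarith
  have hφlr : ∀ r : ℕ, 1 ≤ r → φ ≤ lr θ φ δ r := by
    intro r hr
    unfold lr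
    rw [le_div_iff₀ (by linarith [hLgt1 (r+1)]), hLsucc r hr]
    have h1 : Real.log (1/φ) ≤ 1/φ - 1 := Real.log_le_sub_one_of_pos (by positivity)
    rw [Real.log_div one_ne_zero (ne_of_gt hφ0), Real.log_one] at h1
    have h2 : φ * (0 - Real.log φ) ≤ φ * (1/φ - 1) := mul_le_mul_of_nonneg_left h1 hφ0.le
    have h3 : φ * (1/φ) = 1 := by field_simp
    nlinarith [hLgt1 r]
  have hlr_mono : ∀ r : ℕ, 1 ≤ r → lr θ φ δ r ≤ lr θ φ δ (r+1) := by
    intro r hr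
    unfold lr
    rw [div_le_div_iff₀ (by linarith [hLgt1 (r+1)]) (by linarith [hLgt1 (r+1+1)])]
    rw [hLsucc (r+1) (by omega), hLsucc r hr]
    nlinarith [sq_nonneg (Real.log φ)]
  -- step lemma
  have hEstep : ∀ s : ℕ, 1 ≤ s → 0 < Dseq s →
      φ * (Dseq s * d2 θ φ δ s * lr θ φ δ s) ^ (3/2:ℝ) - Dseq s * d2 θ φ δ s * lr θ φ δ s
        ≥ φ * (d2 θ φ δ s * lr θ φ δ s) →
      Dseq (s+1) * d2 θ φ δ (s+1) * lr θ φ δ (s+1) ≥ Dseq s * d2 θ φ δ s * lr θ φ δ s := by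
    intro s hs hDs hf
    have hPpos : 0 < d2 θ φ δ s * lr θ φ δ s := mul_pos (hd2pos s) (hlr_pos s)
    have hlrs1 : 0 < lr θ φ δ (s+1) := hlr_pos (s+1)
    have harg : d2 θ φ δ s * Real.log (3 / d1 θ φ δ s) / Real.log (3 / d1 θ φ δ (s+1))
        = d2 θ φ δ s * lr θ φ δ s := by unfold lr; ring
    have hfloor := hrec s hs
    rw [harg] at hfloor
    set y := Dseq s ^ (3/2:ℝ) * Real.sqrt (d2 θ φ δ s * lr θ φ δ s) with hy
    have hfl : y - 1 < (⌊y⌋ : ℝ) := Int.sub_one_lt_floor y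
    have hE32 : (Dseq s * d2 θ φ δ s * lr θ φ δ s) ^ (3/2:ℝ)
        = y * (d2 θ φ δ s * lr θ φ δ s) := by
      rw [mul_assoc, Real.mul_rpow hDs.le hPpos.le, hy, rpow32 _ hPpos.le]
      ring
    rw [hE32] at hf
    -- hf : φ * (y * P) - Es ≥ φ * P
    have hmonolr := hlr_mono s hs
    have hEs_nonneg : 0 ≤ Dseq s * d2 θ φ δ s * lr θ φ δ s :=
      mul_nonneg (mul_nonneg hDs.le (hd2pos s).le) (hlr_pos s).le
    have h1' := mul_le_mul_of_nonneg_right hf hlrs1.le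
    have h2' := mul_le_mul_of_nonneg_left hmonolr hEs_nonneg
    have key : (Dseq s * d2 θ φ δ s * lr θ φ δ s) * lr θ φ δ s
        ≤ ((y - 1) * (φ * (d2 θ φ δ s * lr θ φ δ (s+1)))) * lr θ φ δ s :=
      key_aux _ _ _ _ _ _ h1' h2'
    have hfinal : Dseq s * d2 θ φ δ s * lr θ φ δ s
        ≤ (y - 1) * (φ * (d2 θ φ δ s * lr θ φ δ (s+1))) :=
      le_of_mul_le_mul_right key (hlr_pos s)
    have hd2s1 := hd2succ s hs
    calc Dseq s * d2 θ φ δ s * lr θ φ δ s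
        ≤ (y - 1) * (φ * (d2 θ φ δ s * lr θ φ δ (s+1))) := hfinal
      _ ≤ (⌊y⌋ : ℝ) * (φ * (d2 θ φ δ s * lr θ φ δ (s+1))) :=
          mul_le_mul_of_nonneg_right hfl.le
            (mul_pos hφ0 (mul_pos (hd2pos s) hlrs1)).le
      _ = Dseq (s+1) * d2 θ φ δ (s+1) * lr θ φ δ (s+1) := by
          rw [hfloor, hd2s1]; ring
  -- base identity
  have hE1 : Dseq 1 * d2 θ φ δ 1 * lr θ φ δ 1 = (D:ℝ) * B := by
    rw [hD1, hB]
    unfold d2 lr d1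
    norm_num
    ring
  have main : ∀ r : ℕ, 1 ≤ r →
      (3/2 ≤ Dseq r * d2 θ φ δ r * lr θ φ δ r ∧ 0 < Dseq r ∧
       Dseq (r+1) * d2 θ φ δ (r+1) * lr θ φ δ (r+1) ≥ Dseq r * d2 θ φ δ r * lr θ φ δ r ∧
       φ * (Dseq r * d2 θ φ δ r * lr θ φ δ r) ^ (3/2:ℝ) - Dseq r * d2 θ φ δ r * lr θ φ δ r
         ≥ φ * (d2 θ φ δ r * lr θ φ δ r)) := by
    intro r hr
    induction r, hr using Nat.le_induction with
    | base =>
      have hDpos : (0:ℝ) < Dseq 1 := by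
        rw [hD1]; exact_mod_cast (by omega : 0 < D)
      have hd2_1 : d2 θ φ δ 1 = (1-θ)*(1-φ)*δ := by unfold d2; norm_num
      have hf1 : φ * (Dseq 1 * d2 θ φ δ 1 * lr θ φ δ 1) ^ (3/2:ℝ)
          - Dseq 1 * d2 θ φ δ 1 * lr θ φ δ 1 ≥ φ * (d2 θ φ δ 1 * lr θ φ δ 1) := by
        rw [hE1]
        have hub : φ * (d2 θ φ δ 1 * lr θ φ δ 1) ≤ (1-θ)*(1-φ)*φ*δ := by
          rw [hd2_1]
          nlinarith [mul_le_mul_of_nonneg_left (hlr_le1 1 le_rfl)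
            (mul_pos hφ0 (mul_pos (mul_pos h1θ h1φ) hδ0)).le]
        linarith [hASS1]
      refine ⟨by rw [hE1]; exact hASS2, hDpos, hEstep 1 le_rfl hDpos hf1, hf1⟩
    | succ r hr ih =>
      obtain ⟨ih1, ih2, ih3, ih4⟩ := ih
      have hE1pos : 0 < Dseq r * d2 θ φ δ r * lr θ φ δ r := by linarith
      have h32 : 3/2 ≤ Dseq (r+1) * d2 θ φ δ (r+1) * lr θ φ δ (r+1) := le_trans ih1 ih3
      have hP : 0 < d2 θ φ δ (r+1) * lr θ φ δ (r+1) := mul_pos (hd2pos _) (hlr_pos _)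
      have hDpos' : 0 < Dseq (r+1) := by
        by_contra h
        push_neg at h
        have h32' : 3/2 ≤ Dseq (r+1) * (d2 θ φ δ (r+1) * lr θ φ δ (r+1)) := by
          rw [← mul_assoc]; exact h32
        have hle := mul_le_mul_of_nonneg_right h hP.le
        rw [zero_mul] at hle
        linarith
      have hcpos : 0 < φ * (d2 θ φ δ r * lr θ φ δ r) :=
        mul_pos hφ0 (mul_pos (hd2pos r) (hlr_pos r))
      have hf' : φ * (Dseq (r+1) * d2 θ φ δ (r+1) * lr θ φ δ (r+1)) ^ (3/2:ℝ)
          - Dseq (r+1) * d2 θ φ δ (r+1) * lr θ φ δ (r+1)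
          ≥ φ * (d2 θ φ δ (r+1) * lr θ φ δ (r+1)) := by
        have hmono := mono_f φ (Dseq r * d2 θ φ δ r * lr θ φ δ r)
          (Dseq (r+1) * d2 θ φ δ (r+1) * lr θ φ δ (r+1))
          (φ * (d2 θ φ δ r * lr θ φ δ r)) hφ0 hE1pos ih3 hcpos ih4
        have hless : φ * (d2 θ φ δ (r+1) * lr θ φ δ (r+1)) ≤ φ * (d2 θ φ δ r * lr θ φ δ r) := by
          rw [hd2succ r hr]
          have a1 : φ * lr θ φ δ (r+1) ≤ φ :=
            mul_le_of_le_one_right hφ0.le (hlr_le1 (r+1) (by omega))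
          have a2 : φ * lr θ φ δ (r+1) ≤ lr θ φ δ r := a1.trans (hφlr r hr)
          have a3 := mul_le_mul_of_nonneg_left a2 (mul_pos hφ0 (hd2pos r)).le
          have a4 : φ * (φ * d2 θ φ δ r * lr θ φ δ (r+1))
              = (φ * d2 θ φ δ r) * (φ * lr θ φ δ (r+1)) := by ring
          have a5 : φ * (d2 θ φ δ r * lr θ φ δ r)
              = (φ * d2 θ φ δ r) * lr θ φ δ r := by ring
          rw [a4, a5]
          exact a3
        linarith
      exact ⟨h32, hDpos', hEstep (r+1) (by omega) hDpos' hf', hf'⟩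
  intro r hr
  exact ⟨(main r hr).2.2.1, (main r hr).2.2.2⟩
end

section
/- Under the full setup (0 < δ, φ, θ < 1, integer D ≥ 2, hypotheses (i) φ(DB)^{3/2} − DB ≥ (1−θ)(1−φ)φδ with B = (1−θ)(1−φ)δ ln(3/(θ(1−φ)δ))/ln(3/(θ(1−φ)φδ)), and (ii) DB ≥ 3/2, sequences δ_{r,1}, δ_{r,2}, D_r, E_r as before), define F_r := ( D_r − 1/(√(E_r) − 1) ) · φ²·δ_{r,2}·ln(3/δ_{r,1})/ln(3/δ_{r+1,1}). Then F_{r+1} ≥ F_r^{3/2} for every r ≥ 1. -/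
lemma rpow_three_halves {x : ℝ} (hx : 0 ≤ x) :
    x ^ (3/2 : ℝ) = x * Real.sqrt x := by
  rw [show (3/2:ℝ) = 1 + 1/2 by norm_num, Real.rpow_add' hx (by norm_num),
    Real.rpow_one, ← Real.sqrt_eq_rpow]

lemma g_mono {φ a b : ℝ} (ha : 0 ≤ a) (hab : a ≤ b) (h1 : 1 ≤ φ * Real.sqrt a) (hφ : 0 < φ) :
    φ * a * Real.sqrt a - a ≤ φ * b * Real.sqrt b - b := by
  have hb : 0 ≤ b := le_trans ha hab
  have hx := Real.sqrt_nonneg a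
  have hy := Real.sqrt_nonneg b
  have hxy : Real.sqrt a ≤ Real.sqrt b := Real.sqrt_le_sqrt hab
  have hx2 : Real.sqrt a ^ 2 = a := Real.sq_sqrt ha
  have hy2 : Real.sqrt b ^ 2 = b := Real.sq_sqrt hb
  have h2 : 0 ≤ (Real.sqrt b - Real.sqrt a) * ((Real.sqrt b + Real.sqrt a) * (φ * Real.sqrt a - 1)) := by
    apply mul_nonneg (by linarith)
    apply mul_nonneg (by linarith) (by linarith)
  have h3 : 0 ≤ φ * ((Real.sqrt b - Real.sqrt a) * Real.sqrt b ^ 2) :=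
    mul_nonneg hφ.le (mul_nonneg (by linarith) (sq_nonneg _))
  have hx3 : Real.sqrt a ^ 3 = a * Real.sqrt a := by rw [pow_succ, hx2]
  have hy3 : Real.sqrt b ^ 3 = b * Real.sqrt b := by rw [pow_succ, hy2]
  nlinarith [h2, h3, hx3, hy3]

lemma phi_sqrt_gt {φ c E : ℝ} (hc : 0 < c) (hE : 0 < E)
    (h : φ * E * Real.sqrt E - E ≥ c) : 1 < φ * Real.sqrt E := by
  nlinarith [Real.sq_sqrt hE.le, Real.sqrt_nonneg E]

lemma pos_of_mul_pos' {a b : ℝ} (hb : 0 < b) (h : 0 < a * b) : 0 < a := by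
  by_contra hc
  push_neg at hc
  nlinarith [mul_nonneg (neg_nonneg.2 hc) hb.le]

lemma main_step (φ dl L L' a D' : ℝ)
    (hφ0 : 0 < φ) (hφ1 : φ < 1)
    (hdl0 : 0 < dl) (hdl1 : dl < 1 - φ)
    (hL0 : 0 < L) (hL1 : L < 1) (hL'0 : 0 < L') (hLL : L ≤ L')
    (hD' : a * Real.sqrt (a * dl * L) - 1 ≤ D')
    (hInv1 : 3/2 ≤ a * dl * L)
    (hInv2 : φ * (a * dl * L) * Real.sqrt (a * dl * L) - a * dl * L ≥ φ * dl) :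
    a * dl * L ≤ D' * (φ * dl) * L' ∧ 3/2 ≤ D' * (φ * dl) * L' ∧
      φ * (D' * (φ * dl) * L') * Real.sqrt (D' * (φ * dl) * L') - D' * (φ * dl) * L'
        ≥ φ * (φ * dl) := by
  set E := a * dl * L with hE
  set e := Real.sqrt E with he
  have hE0 : (0:ℝ) < E := by linarith
  have he0 : 0 ≤ e := Real.sqrt_nonneg _
  have he2 : e ^ 2 = E := Real.sq_sqrt hE0.le
  have hφe : 1 < φ * e := by nlinarith [mul_pos hφ0 hdl0]
  have he1 : 1 < e := by nlinarith
  have ha : 0 < a := by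
    by_contra h
    push_neg at h
    nlinarith [mul_pos hdl0 hL0, mul_nonneg (neg_nonneg.2 h) (mul_pos hdl0 hL0).le]
  have hae1 : 1 ≤ a * e - 1 := by nlinarith [mul_pos hdl0 hL0, mul_nonneg ha.le (mul_pos hdl0 hL0).le]
  have hchain : φ * E * e - φ * (dl * L) ≤ D' * (φ * dl) * L' := by
    have h1 : (a * e - 1) * (φ * dl) * L ≤ (a * e - 1) * (φ * dl) * L' := by
      apply mul_le_mul_of_nonneg_left hLL
      positivity
    have h2 : (a * e - 1) * (φ * dl) * L' ≤ D' * (φ * dl) * L' := by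
      apply mul_le_mul_of_nonneg_right _ hL'0.le
      exact mul_le_mul_of_nonneg_right hD' (by positivity)
    nlinarith [h1, h2]
  have hEE' : E ≤ D' * (φ * dl) * L' := by
    nlinarith [mul_pos hφ0 hdl0, mul_pos (mul_pos hφ0 hdl0) hL0]
  refine ⟨hEE', by linarith, ?_⟩
  nlinarith [g_mono hE0.le hEE' hφe.le hφ0, mul_pos hφ0 hdl0]

set_option maxHeartbeats 1000000 in
lemma main_final (φ dl L L' a D' : ℝ)
    (hφ0 : 0 < φ) (hφ1 : φ < 1)
    (hdl0 : 0 < dl) (hdl1 : dl < 1 - φ)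
    (hL0 : 0 < L) (hL1 : L < 1) (hL'0 : 0 < L') (hLL : L ≤ L')
    (hD' : a * Real.sqrt (a * dl * L) - 1 ≤ D')
    (hInv1 : 3/2 ≤ a * dl * L)
    (hInv2 : φ * (a * dl * L) * Real.sqrt (a * dl * L) - a * dl * L ≥ φ * dl)
    (hInv2' : φ * (D' * (φ * dl) * L') * Real.sqrt (D' * (φ * dl) * L') - D' * (φ * dl) * L'
        ≥ φ * (φ * dl))
    (hEE' : a * dl * L ≤ D' * (φ * dl) * L') :
    (D' - 1 / (Real.sqrt (D' * (φ * dl) * L') - 1)) * (φ ^ 2 * (φ * dl) * L')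
      ≥ ((a - 1 / (Real.sqrt (a * dl * L) - 1)) * (φ ^ 2 * dl * L)) ^ (3/2 : ℝ) := by
  set E := a * dl * L with hE
  set E' := D' * (φ * dl) * L' with hE'
  set e := Real.sqrt E with he
  set e' := Real.sqrt E' with he'
  have hE0 : (0:ℝ) < E := by linarith
  have hE'0 : (0:ℝ) < E' := by linarith
  have he0 : 0 ≤ e := Real.sqrt_nonneg _
  have he'0 : 0 ≤ e' := Real.sqrt_nonneg _
  have he2 : e ^ 2 = E := Real.sq_sqrt hE0.le
  have he'2 : e' ^ 2 = E' := Real.sq_sqrt hE'0.le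
  have hee' : e ≤ e' := Real.sqrt_le_sqrt hEE'
  have hφe : 1 < φ * e := phi_sqrt_gt (mul_pos hφ0 hdl0) hE0 hInv2
  have hφe' : 1 < φ * e' := phi_sqrt_gt (mul_pos hφ0 (mul_pos hφ0 hdl0)) hE'0
    (by exact hInv2')
  have he1 : 1 < e := by nlinarith
  have he'1 : 1 < e' := by nlinarith
  have ha : 0 < a := by
    refine pos_of_mul_pos' (mul_pos hdl0 hL0) ?_
    have : a * (dl * L) = E := by rw [hE]; ring
    linarith
  have haphi : 3/2 ≤ a * (1 - φ) := by
    have h1 : dl * L < 1 - φ := by nlinarith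
    have h2 := mul_lt_mul_of_pos_left h1 ha
    have h3 : a * (dl * L) = E := by rw [hE]; ring
    linarith
  set x := 1 / (e - 1) with hx
  set x' := 1 / (e' - 1) with hx'
  have hem : 0 < e - 1 := by linarith
  have he'm : 0 < e' - 1 := by linarith
  have hx0 : 0 < x := by positivity
  have hx'0 : 0 < x' := by positivity
  have hxb : x * (1 - φ) ≤ φ := by
    rw [hx, div_mul_eq_mul_div, div_le_iff₀ hem]
    nlinarith
  have hx'b : x' * (1 - φ) ≤ φ := by
    rw [hx', div_mul_eq_mul_div, div_le_iff₀ he'm]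
    nlinarith
  have key1 : 1 + x' ≤ e * x := by
    have h1 : x' ≤ x := by
      apply one_div_le_one_div_of_le hem
      linarith
    have h2 : e * x = 1 + x := by
      rw [hx]
      field_simp
      ring
    linarith
  have hax : 0 < a - x := by nlinarith [mul_pos hx0 (show (0:ℝ) < 1 - φ by linarith)]
  have hbr : 0 ≤ a * e - 1 - x' := by nlinarith [mul_lt_mul_of_pos_left he1 ha]
  have hsq1 : Real.sqrt ((a - x) * (φ ^ 2 * dl * L))
      = Real.sqrt (a - x) * (φ * Real.sqrt (dl * L)) := by
    rw [Real.sqrt_mul hax.le, show φ ^ 2 * dl * L = φ ^ 2 * (dl * L) by ring,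
      Real.sqrt_mul (sq_nonneg φ), Real.sqrt_sq hφ0.le]
  have hsqe : Real.sqrt a * Real.sqrt (dl * L) = e := by
    rw [he, hE, ← Real.sqrt_mul ha.le, mul_assoc]
  have hsax : Real.sqrt (a - x) ≤ Real.sqrt a := Real.sqrt_le_sqrt (by linarith)
  have hFnn : 0 ≤ (a - x) * (φ ^ 2 * dl * L) := by positivity
  have hRHS : ((a - x) * (φ ^ 2 * dl * L)) ^ (3/2 : ℝ)
      ≤ φ ^ 3 * dl * L * (a * e - e * x) := by
    rw [rpow_three_halves hFnn, hsq1]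
    have h1 : (a - x) * (φ ^ 2 * dl * L) * (Real.sqrt (a - x) * (φ * Real.sqrt (dl * L)))
        ≤ (a - x) * (φ ^ 2 * dl * L) * (Real.sqrt a * (φ * Real.sqrt (dl * L))) := by
      apply mul_le_mul_of_nonneg_left _ hFnn
      apply mul_le_mul_of_nonneg_right hsax
      positivity
    have h2 : (a - x) * (φ ^ 2 * dl * L) * (Real.sqrt a * (φ * Real.sqrt (dl * L)))
        = φ ^ 3 * dl * L * ((a - x) * (Real.sqrt a * Real.sqrt (dl * L))) := by ring
    rw [h2, hsqe] at h1
    calc (a - x) * (φ ^ 2 * dl * L) * (Real.sqrt (a - x) * (φ * Real.sqrt (dl * L)))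
        ≤ φ ^ 3 * dl * L * ((a - x) * e) := h1
      _ = φ ^ 3 * dl * L * (a * e - e * x) := by ring
  have hLHS : φ ^ 3 * dl * L * (a * e - e * x) ≤ (D' - x') * (φ ^ 2 * (φ * dl) * L') := by
    have h1 : φ ^ 3 * dl * L * (a * e - e * x) ≤ φ ^ 3 * dl * L * (a * e - 1 - x') := by
      apply mul_le_mul_of_nonneg_left (by linarith) (by positivity)
    have h2 : φ ^ 3 * dl * L * (a * e - 1 - x') ≤ φ ^ 3 * dl * L' * (a * e - 1 - x') := by
      apply mul_le_mul_of_nonneg_right _ hbr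
      have : (0:ℝ) < φ ^ 3 * dl := by positivity
      nlinarith
    have h3 : φ ^ 3 * dl * L' * (a * e - 1 - x') ≤ φ ^ 3 * dl * L' * (D' - x') := by
      apply mul_le_mul_of_nonneg_left (by linarith) (by positivity)
    calc φ ^ 3 * dl * L * (a * e - e * x) ≤ φ ^ 3 * dl * L' * (D' - x') := by linarith
      _ = (D' - x') * (φ ^ 2 * (φ * dl) * L') := by ring
  linarith

set_option maxHeartbeats 1000000 in
theorem stmt_11
    (δ φ θ : ℝ) (hδ0 : 0 < δ) (hδ1 : δ < 1) (hφ0 : 0 < φ) (hφ1 : φ < 1)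
    (hθ0 : 0 < θ) (hθ1 : θ < 1) (D : ℕ) (hD : 2 ≤ D)
    (B : ℝ)
    (hB : B = (1 - θ) * (1 - φ) * δ * Real.log (3 / (θ * (1 - φ) * δ)) /
      Real.log (3 / (θ * (1 - φ) * φ * δ)))
    (hASS1 : φ * ((D : ℝ) * B) ^ (3 / 2 : ℝ) - (D : ℝ) * B ≥ (1 - θ) * (1 - φ) * φ * δ)
    (hASS2 : (D : ℝ) * B ≥ 3 / 2)
    (Dseq : ℕ → ℝ) (hD1 : Dseq 1 = D)
    (hrec : ∀ r : ℕ, 1 ≤ r → Dseq (r + 1) = (⌊Dseq r ^ (3 / 2 : ℝ) *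
      Real.sqrt (d2 θ φ δ r * Real.log (3 / d1 θ φ δ r) /
        Real.log (3 / d1 θ φ δ (r + 1)))⌋ : ℤ))
    (F : ℕ → ℝ)
    (hF : ∀ r : ℕ, 1 ≤ r → F r =
      (Dseq r - 1 / (Real.sqrt (Dseq r * d2 θ φ δ r * lr θ φ δ r) - 1)) *
        (φ ^ 2 * d2 θ φ δ r * lr θ φ δ r)) :
    ∀ r : ℕ, 1 ≤ r → F (r + 1) ≥ F r ^ (3 / 2 : ℝ) := by
  have h1φ : 0 < 1 - φ := by linarith
  have h1θ : 0 < 1 - θ := by linarith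
  -- basic facts about d1, d2, lr
  have hd1p : ∀ r : ℕ, 0 < d1 θ φ δ r := fun r => by
    unfold d1; exact mul_pos (mul_pos (mul_pos hθ0 h1φ) (pow_pos hφ0 _)) hδ0
  have hd1l : ∀ r : ℕ, d1 θ φ δ r < 1 := fun r => by
    unfold d1
    have hp1 : φ ^ (r-1) ≤ 1 := pow_le_one₀ hφ0.le hφ1.le
    have h2 : θ * (1-φ) < 1 := by nlinarith
    have h3 : φ ^ (r-1) * δ ≤ 1 := by nlinarith [pow_pos hφ0 (r-1)]
    nlinarith [mul_le_mul_of_nonneg_left h3 (mul_pos hθ0 h1φ).le, mul_pos hθ0 h1φ]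
  have hlog3 : ∀ r : ℕ, 0 < Real.log (3 / d1 θ φ δ r) := fun r =>
    Real.log_pos ((one_lt_div (hd1p r)).2 (by linarith [hd1l r]))
  have hd1s : ∀ r : ℕ, 1 ≤ r → d1 θ φ δ (r+1) = φ * d1 θ φ δ r := fun r hr => by
    obtain ⟨k, rfl⟩ : ∃ k, r = k + 1 := ⟨r - 1, by omega⟩
    unfold d1
    simp only [Nat.add_sub_cancel]
    ring
  have hd2p : ∀ r : ℕ, 0 < d2 θ φ δ r := fun r => by
    unfold d2; exact mul_pos (mul_pos (mul_pos h1θ h1φ) (pow_pos hφ0 _)) hδ0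
  have hd2l : ∀ r : ℕ, d2 θ φ δ r < 1 - φ := fun r => by
    unfold d2
    have hp1 : φ ^ (r-1) ≤ 1 := pow_le_one₀ hφ0.le hφ1.le
    have t1 : (1 - θ) * φ ^ (r-1) ≤ 1 := by nlinarith [pow_pos hφ0 (r-1)]
    have h3 : (1 - θ) * φ ^ (r-1) * δ < 1 := by
      nlinarith [mul_le_mul_of_nonneg_right t1 hδ0.le]
    nlinarith [mul_lt_mul_of_pos_left h3 h1φ]
  have hd2s : ∀ r : ℕ, 1 ≤ r → d2 θ φ δ (r+1) = φ * d2 θ φ δ r := fun r hr => by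
    obtain ⟨k, rfl⟩ : ∃ k, r = k + 1 := ⟨r - 1, by omega⟩
    unfold d2
    simp only [Nat.add_sub_cancel]
    ring
  have hlogs : ∀ r : ℕ, 1 ≤ r → Real.log (3 / d1 θ φ δ (r+1))
      = Real.log (3 / d1 θ φ δ r) - Real.log φ := fun r hr => by
    rw [hd1s r hr, div_mul_eq_div_div_swap,
      Real.log_div (ne_of_gt (div_pos (by norm_num) (hd1p r))) (ne_of_gt hφ0)]
  have hlrp : ∀ r : ℕ, 0 < lr θ φ δ r := fun r => div_pos (hlog3 r) (hlog3 (r+1))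
  have hlogφ : Real.log φ < 0 := Real.log_neg hφ0 hφ1
  have hlrl : ∀ r : ℕ, 1 ≤ r → lr θ φ δ r < 1 := fun r hr => by
    unfold lr
    rw [div_lt_one (hlog3 (r+1)), hlogs r hr]
    linarith
  have hlrm : ∀ r : ℕ, 1 ≤ r → lr θ φ δ r ≤ lr θ φ δ (r+1) := fun r hr => by
    unfold lr
    rw [div_le_div_iff₀ (hlog3 (r+1)) (hlog3 (r+2)), hlogs (r+1) (by omega), hlogs r hr]
    nlinarith [sq_nonneg (Real.log φ)]
  -- the floor bound
  have hfloor : ∀ r : ℕ, 1 ≤ r → 0 < Dseq r →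
      Dseq r * Real.sqrt (Dseq r * d2 θ φ δ r * lr θ φ δ r) - 1 ≤ Dseq (r+1) := by
    intro r hr ha
    rw [hrec r hr]
    have harg : d2 θ φ δ r * Real.log (3 / d1 θ φ δ r) / Real.log (3 / d1 θ φ δ (r + 1))
        = d2 θ φ δ r * lr θ φ δ r := by
      unfold lr; ring
    have hz : Dseq r ^ (3/2 : ℝ) * Real.sqrt (d2 θ φ δ r * Real.log (3 / d1 θ φ δ r) /
        Real.log (3 / d1 θ φ δ (r + 1)))
        = Dseq r * Real.sqrt (Dseq r * d2 θ φ δ r * lr θ φ δ r) := by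
      rw [harg, rpow_three_halves ha.le,
        show Dseq r * d2 θ φ δ r * lr θ φ δ r = Dseq r * (d2 θ φ δ r * lr θ φ δ r) by ring,
        Real.sqrt_mul ha.le]
      ring
    rw [← hz]
    have := Int.sub_one_lt_floor (Dseq r ^ (3/2 : ℝ) * Real.sqrt (d2 θ φ δ r *
      Real.log (3 / d1 θ φ δ r) / Real.log (3 / d1 θ φ δ (r + 1))))
    linarith
  -- base case computation
  have e1 : d1 θ φ δ 1 = θ * (1-φ) * δ := by unfold d1; norm_num
  have e2 : d1 θ φ δ 2 = θ * (1-φ) * φ * δ := by unfold d1; norm_num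
  have e3 : d2 θ φ δ 1 = (1-θ) * (1-φ) * δ := by unfold d2; norm_num
  have hbase : Dseq 1 * d2 θ φ δ 1 * lr θ φ δ 1 = (D:ℝ) * B := by
    rw [hD1, hB]
    unfold lr
    rw [e1, e2, e3]
    ring
  -- the invariant
  have key : ∀ r : ℕ, 1 ≤ r →
      3/2 ≤ Dseq r * d2 θ φ δ r * lr θ φ δ r ∧
      φ * (Dseq r * d2 θ φ δ r * lr θ φ δ r) *
          Real.sqrt (Dseq r * d2 θ φ δ r * lr θ φ δ r)
        - Dseq r * d2 θ φ δ r * lr θ φ δ r ≥ φ * d2 θ φ δ r := by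
    intro r hr
    induction r, hr using Nat.le_induction with
    | base =>
      constructor
      · rw [hbase]; exact hASS2
      · rw [hbase, e3]
        rw [rpow_three_halves (by linarith : (0:ℝ) ≤ (D:ℝ) * B)] at hASS1
        nlinarith [hASS1]
    | succ r hr ih =>
      obtain ⟨ih1, ih2⟩ := ih
      have ha : 0 < Dseq r := by
        refine pos_of_mul_pos' (mul_pos (hd2p r) (hlrp r)) ?_
        have : Dseq r * (d2 θ φ δ r * lr θ φ δ r) = Dseq r * d2 θ φ δ r * lr θ φ δ r := by
          ring
        rw [this]; linarith
      have hstep := main_step φ (d2 θ φ δ r) (lr θ φ δ r) (lr θ φ δ (r+1)) (Dseq r)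
        (Dseq (r+1)) hφ0 hφ1 (hd2p r) (hd2l r) (hlrp r) (hlrl r hr) (hlrp (r+1))
        (hlrm r hr) (hfloor r hr ha) ih1 ih2
      rw [hd2s r hr]
      exact ⟨hstep.2.1, hstep.2.2⟩
  -- conclusion
  intro r hr
  obtain ⟨ih1, ih2⟩ := key r hr
  have ha : 0 < Dseq r := by
    refine pos_of_mul_pos' (mul_pos (hd2p r) (hlrp r)) ?_
    have : Dseq r * (d2 θ φ δ r * lr θ φ δ r) = Dseq r * d2 θ φ δ r * lr θ φ δ r := by ring
    rw [this]; linarith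
  have hstep := main_step φ (d2 θ φ δ r) (lr θ φ δ r) (lr θ φ δ (r+1)) (Dseq r)
    (Dseq (r+1)) hφ0 hφ1 (hd2p r) (hd2l r) (hlrp r) (hlrl r hr) (hlrp (r+1))
    (hlrm r hr) (hfloor r hr ha) ih1 ih2
  rw [hF r hr, hF (r+1) (by omega), hd2s r hr]
  exact main_final φ (d2 θ φ δ r) (lr θ φ δ r) (lr θ φ δ (r+1)) (Dseq r) (Dseq (r+1))
    hφ0 hφ1 (hd2p r) (hd2l r) (hlrp r) (hlrl r hr) (hlrp (r+1)) (hlrm r hr)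
    (hfloor r hr ha) ih1 ih2 hstep.2.2 hstep.1
end

section
/- Under the full setup with A := ( D − 1/(√(DB) − 1) ) · (1−θ)(1−φ)φ²δ · ln(3/(θ(1−φ)δ)) / ln(3/(θ(1−φ)φδ)) > 1, the division schedule satisfies D_r ≥ A^{(3/2)^{r−1}} / ( (1−θ)(1−φ)φ²δ ) for every r ≥ 1. -/
section
variable {θ φ δ : ℝ} (hδ0 : 0 < δ) (hδ1 : δ < 1) (hφ0 : 0 < φ) (hφ1 : φ < 1)
  (hθ0 : 0 < θ) (hθ1 : θ < 1)
include hδ0 hφ0 hφ1 hθ0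

lemma d1_pos (r : ℕ) : 0 < d1 θ φ δ r := by
  have h : 0 < 1 - φ := by linarith
  unfold d1; positivity

include hδ1 hθ1 in
lemma d1_lt_one (r : ℕ) : d1 θ φ δ r < 1 := by
  have h : 0 < 1 - φ := by linarith
  have hp : φ ^ (r-1) ≤ 1 := pow_le_one₀ hφ0.le hφ1.le
  have h2 : θ * (1 - φ) * φ ^ (r - 1) * δ ≤ θ * (1 - φ) * 1 * δ := by
    apply mul_le_mul_of_nonneg_right _ hδ0.le
    apply mul_le_mul_of_nonneg_left hp (by positivity)
  have t1 : θ * (1 - φ) < 1 := by nlinarith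
  have h3 : θ * (1 - φ) * 1 * δ < 1 := by nlinarith
  unfold d1; linarith

include hδ1 hθ1 in
lemma Lpos (r : ℕ) : 0 < Real.log (3 / d1 θ φ δ r) := by
  apply Real.log_pos
  rw [lt_div_iff₀ (d1_pos hδ0 hφ0 hφ1 hθ0 r)]
  have := d1_lt_one hδ0 hδ1 hφ0 hφ1 hθ0 hθ1 (r := r)
  linarith

lemma Lsucc {r : ℕ} (hr : 1 ≤ r) :
    Real.log (3 / d1 θ φ δ (r+1)) = Real.log (3 / d1 θ φ δ r) + Real.log φ⁻¹ := by
  have h : d1 θ φ δ (r+1) = φ * d1 θ φ δ r := by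
    unfold d1; rw [show r+1-1 = (r-1)+1 from by omega, pow_succ]; ring
  have h1 := d1_pos hδ0 hφ0 hφ1 hθ0 (δ := δ) (r := r)
  rw [h, show 3/(φ * d1 θ φ δ r) = (3 / d1 θ φ δ r) * φ⁻¹ by field_simp,
    Real.log_mul (by positivity) (by positivity)]

include hδ1 hθ1 in
lemma lr_pos {r : ℕ} (hr : 1 ≤ r) : 0 < lr θ φ δ r := by
  unfold lr
  exact div_pos (Lpos hδ0 hδ1 hφ0 hφ1 hθ0 hθ1 r) (Lpos hδ0 hδ1 hφ0 hφ1 hθ0 hθ1 (r+1))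

include hδ1 hθ1 in
lemma lr_le_one {r : ℕ} (hr : 1 ≤ r) : lr θ φ δ r ≤ 1 := by
  unfold lr
  rw [div_le_one (Lpos hδ0 hδ1 hφ0 hφ1 hθ0 hθ1 (r+1)), Lsucc hδ0 hφ0 hφ1 hθ0 hr]
  have : 0 ≤ Real.log φ⁻¹ := Real.log_nonneg (by rw [le_inv_comm₀] <;> simp [hφ0, hφ1.le])
  linarith

include hθ1 in
lemma d2_pos (r : ℕ) : 0 < d2 θ φ δ r := by
  have h : 0 < 1 - φ := by linarith
  have h2 : 0 < 1 - θ := by linarith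
  unfold d2; positivity

omit hδ0 hφ0 hφ1 hθ0 in
lemma d2_succ {r : ℕ} (hr : 1 ≤ r) : d2 θ φ δ (r+1) = φ * d2 θ φ δ r := by
  unfold d2; rw [show r+1-1 = (r-1)+1 from by omega, pow_succ]; ring

include hθ1 in
lemma d2_le (r : ℕ) : d2 θ φ δ r ≤ (1 - θ) * (1 - φ) * δ := by
  have h : 0 < 1 - φ := by linarith
  have h2 : 0 < 1 - θ := by linarith
  have hp : φ ^ (r-1) ≤ 1 := pow_le_one₀ hφ0.le hφ1.le
  unfold d2
  calc (1 - θ) * (1 - φ) * φ ^ (r - 1) * δ ≤ (1 - θ) * (1 - φ) * 1 * δ := by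
        apply mul_le_mul_of_nonneg_right _ hδ0.le
        exact mul_le_mul_of_nonneg_left hp (by positivity)
    _ = (1 - θ) * (1 - φ) * δ := by ring

include hδ1 hθ1 in
lemma d2_lt_one (r : ℕ) : d2 θ φ δ r < 1 := by
  have := d2_le hδ0 hφ0 hφ1 hθ0 hθ1 (δ := δ) r
  have h : 0 < 1 - φ := by linarith
  have h2 : 0 < 1 - θ := by linarith
  have t1 : (1 - θ) * (1 - φ) < 1 := by nlinarith
  have t2 : (1 - θ) * (1 - φ) * δ < 1 := by nlinarith
  linarith
end

noncomputable def Bf (θ φ δ : ℝ) (r : ℕ) : ℝ := d2 θ φ δ r * lr θ φ δ r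

section
variable {θ φ δ : ℝ} (hδ0 : 0 < δ) (hδ1 : δ < 1) (hφ0 : 0 < φ) (hφ1 : φ < 1)
  (hθ0 : 0 < θ) (hθ1 : θ < 1)
include hδ0 hδ1 hφ0 hφ1 hθ0 hθ1

lemma Bf_pos {r : ℕ} (hr : 1 ≤ r) : 0 < Bf θ φ δ r :=
  mul_pos (d2_pos hδ0 hφ0 hφ1 hθ0 hθ1 r) (lr_pos hδ0 hδ1 hφ0 hφ1 hθ0 hθ1 hr)

lemma Bf_le {r : ℕ} (hr : 1 ≤ r) : Bf θ φ δ r ≤ d2 θ φ δ r := by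
  have h1 := d2_pos hδ0 hφ0 hφ1 hθ0 hθ1 (δ := δ) r
  have h2 := lr_le_one hδ0 hδ1 hφ0 hφ1 hθ0 hθ1 (δ := δ) hr
  calc Bf θ φ δ r ≤ d2 θ φ δ r * 1 := mul_le_mul_of_nonneg_left h2 h1.le
    _ = d2 θ φ δ r := mul_one _

lemma Bf_lt_one {r : ℕ} (hr : 1 ≤ r) : Bf θ φ δ r < 1 :=
  lt_of_le_of_lt (Bf_le hδ0 hδ1 hφ0 hφ1 hθ0 hθ1 hr) (d2_lt_one hδ0 hδ1 hφ0 hφ1 hθ0 hθ1 r)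

lemma Bf_succ {r : ℕ} (hr : 1 ≤ r) : φ * Bf θ φ δ r ≤ Bf θ φ δ (r+1) := by
  set L := Real.log (3 / d1 θ φ δ r) with hL
  set c := Real.log φ⁻¹ with hc
  have hLpos : 0 < L := Lpos hδ0 hδ1 hφ0 hφ1 hθ0 hθ1 r
  have hcpos : 0 ≤ c := Real.log_nonneg (by rw [← one_div, le_div_iff₀ hφ0]; linarith)
  have e1 : Real.log (3 / d1 θ φ δ (r+1)) = L + c := Lsucc hδ0 hφ0 hφ1 hθ0 hr
  have e2 : Real.log (3 / d1 θ φ δ (r+2)) = L + c + c := by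
    rw [show r+2 = (r+1)+1 from rfl, Lsucc hδ0 hφ0 hφ1 hθ0 (by omega), e1]
  have hd2 : d2 θ φ δ (r+1) = φ * d2 θ φ δ r := d2_succ hr
  have hdp := d2_pos hδ0 hφ0 hφ1 hθ0 hθ1 (δ := δ) r
  unfold Bf lr
  rw [hd2, e1, e2, ← hL]
  have key : L / (L + c) ≤ (L + c) / (L + c + c) := by
    rw [div_le_div_iff₀ (by linarith) (by linarith)]
    nlinarith
  calc φ * (d2 θ φ δ r * (L / (L + c))) ≤ φ * (d2 θ φ δ r * ((L+c) / (L+c+c))) := by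
        apply mul_le_mul_of_nonneg_left _ hφ0.le
        exact mul_le_mul_of_nonneg_left key hdp.le
    _ = φ * d2 θ φ δ r * ((L+c) / (L+c+c)) := by ring
end

lemma key1 {a b : ℝ} (hb : 0 ≤ b) (hab : b ≤ a) :
    Real.sqrt a * (a - b) ≤ a * Real.sqrt a - b * Real.sqrt b := by
  have h1 : Real.sqrt b ≤ Real.sqrt a := Real.sqrt_le_sqrt hab
  nlinarith [Real.sqrt_nonneg b, Real.sqrt_nonneg a, Real.sq_sqrt hb, Real.sq_sqrt (hb.trans hab)]

lemma key1b {a b : ℝ} (hb : 0 ≤ b) (hab : b ≤ a) :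
    Real.sqrt b * (a - b) ≤ a * Real.sqrt a - b * Real.sqrt b := by
  have h1 : Real.sqrt b ≤ Real.sqrt a := Real.sqrt_le_sqrt hab
  nlinarith [Real.sqrt_nonneg b, Real.sqrt_nonneg a, Real.sq_sqrt hb, Real.sq_sqrt (hb.trans hab)]

lemma sqrt32 {x : ℝ} (hx : 0 ≤ x) : x ^ (3/2:ℝ) = x * Real.sqrt x := by
  rw [show (3/2:ℝ) = 1 + 1/2 by norm_num, Real.rpow_add' hx (by norm_num), Real.rpow_one,
    ← Real.sqrt_eq_rpow]

set_option maxHeartbeats 1000000 in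
theorem stmt_13
    (δ φ θ : ℝ) (hδ0 : 0 < δ) (hδ1 : δ < 1) (hφ0 : 0 < φ) (hφ1 : φ < 1)
    (hθ0 : 0 < θ) (hθ1 : θ < 1) (D : ℕ) (hD : 2 ≤ D)
    (B : ℝ)
    (hB : B = (1 - θ) * (1 - φ) * δ * Real.log (3 / (θ * (1 - φ) * δ)) /
      Real.log (3 / (θ * (1 - φ) * φ * δ)))
    (hASS1 : φ * ((D : ℝ) * B) ^ (3 / 2 : ℝ) - (D : ℝ) * B ≥ (1 - θ) * (1 - φ) * φ * δ)
    (hASS2 : (D : ℝ) * B ≥ 3 / 2)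
    (Dseq : ℕ → ℝ) (hD1 : Dseq 1 = D)
    (hrec : ∀ r : ℕ, 1 ≤ r → Dseq (r + 1) = (⌊Dseq r ^ (3 / 2 : ℝ) *
      Real.sqrt (d2 θ φ δ r * Real.log (3 / d1 θ φ δ r) /
        Real.log (3 / d1 θ φ δ (r + 1)))⌋ : ℤ))
    (A : ℝ)
    (hA : A = ((D : ℝ) - 1 / (Real.sqrt ((D : ℝ) * B) - 1)) *
      ((1 - θ) * (1 - φ) * φ ^ 2 * δ) * Real.log (3 / (θ * (1 - φ) * δ)) /
        Real.log (3 / (θ * (1 - φ) * φ * δ)))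
    (hA1 : 1 < A) :
    ∀ r : ℕ, 1 ≤ r →
      Dseq r ≥ A ^ ((3 / 2 : ℝ) ^ (r - 1)) / ((1 - θ) * (1 - φ) * φ ^ 2 * δ) := by
  have e1 : d1 θ φ δ 1 = θ * (1 - φ) * δ := by simp [d1]
  have e2 : d1 θ φ δ (1+1) = θ * (1 - φ) * φ * δ := by simp [d1]
  have e3 : d2 θ φ δ 1 = (1 - θ) * (1 - φ) * δ := by simp [d2]
  have e4 : d2 θ φ δ (1+1) = (1 - θ) * (1 - φ) * φ * δ := by simp [d2]
  have hBf1 : Bf θ φ δ 1 = B := by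
    rw [Bf, lr, e1, e2, e3, hB]; ring
  have hA' : A = ((D:ℝ) - 1 / (Real.sqrt ((D:ℝ) * B) - 1)) * (φ^2 * Bf θ φ δ 1) := by
    rw [Bf, lr, e1, e2, e3, hA]; ring
  have key : ∀ r : ℕ, 1 ≤ r →
      (Dseq r - 1 / (Real.sqrt (Dseq r * Bf θ φ δ r) - 1)) * (φ^2 * Bf θ φ δ r)
        ≥ A ^ ((3/2:ℝ) ^ (r-1)) ∧
      φ * (Dseq r * Bf θ φ δ r) * Real.sqrt (Dseq r * Bf θ φ δ r) - Dseq r * Bf θ φ δ r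
        ≥ d2 θ φ δ (r+1) ∧
      3/2 ≤ Dseq r * Bf θ φ δ r := by
    intro r hr
    induction r, hr using Nat.le_induction with
    | base =>
      have hA'' : A = ((D:ℝ) - 1 / (Real.sqrt ((D:ℝ) * B) - 1)) * (φ^2 * B) := by
        rw [hA', hBf1]
      rw [hD1, hBf1]
      refine ⟨?_, ?_, hASS2⟩
      · rw [show ((3/2:ℝ)^(1-1)) = 1 by norm_num, Real.rpow_one]
        exact ge_of_eq hA''.symm
      · rw [sqrt32 (by linarith : (0:ℝ) ≤ (D:ℝ) * B)] at hASS1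
        rw [e4]; linarith [hASS1]
    | succ n hn ih =>
      obtain ⟨ihF, ihG, ihE⟩ := ih
      have hBn : 0 < Bf θ φ δ n := Bf_pos hδ0 hδ1 hφ0 hφ1 hθ0 hθ1 hn
      have hBn1 : 0 < Bf θ φ δ (n+1) := Bf_pos hδ0 hδ1 hφ0 hφ1 hθ0 hθ1 (by omega)
      have hBfs : φ * Bf θ φ δ n ≤ Bf θ φ δ (n+1) := Bf_succ hδ0 hδ1 hφ0 hφ1 hθ0 hθ1 hn
      have hBnlt : Bf θ φ δ n < 1 := Bf_lt_one hδ0 hδ1 hφ0 hφ1 hθ0 hθ1 hn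
      have hd2n : d2 θ φ δ (n+1) = φ * d2 θ φ δ n := d2_succ hn
      have hd2n2 : d2 θ φ δ (n+2) = φ * d2 θ φ δ (n+1) := d2_succ (by omega)
      have hd2pos : 0 < d2 θ φ δ (n+1) := d2_pos hδ0 hφ0 hφ1 hθ0 hθ1 _
      have hBfd2 : Bf θ φ δ n ≤ d2 θ φ δ n := Bf_le hδ0 hδ1 hφ0 hφ1 hθ0 hθ1 hn
      set En := Dseq n * Bf θ φ δ n with hEn
      have hEpos : 0 < En := by linarith
      have hDn : 0 < Dseq n := by
        rcases mul_pos_iff.mp hEpos with ⟨h, _⟩ | ⟨_, h⟩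
        · exact h
        · linarith
      have hDnE : En ≤ Dseq n := by
        have := mul_le_mul_of_nonneg_left hBnlt.le hDn.le
        rw [hEn]; linarith [this]
      set sn := Real.sqrt En with hsn
      have hsn1 : 1 < sn := by
        have h := Real.sqrt_lt_sqrt (by norm_num : (0:ℝ) ≤ 1) (by linarith : (1:ℝ) < En)
        simpa using h
      have hsnsq : sn ^ 2 = En := Real.sq_sqrt hEpos.le
      have hφs : 1 ≤ φ * sn := by
        by_contra h
        push_neg at h
        have h2 : (φ * sn) * En < 1 * En := mul_lt_mul_of_pos_right h hEpos
        have h3 : φ * En * sn = (φ * sn) * En := by ring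
        linarith [ihG, hd2pos]
      -- lower bound on Dseq (n+1)
      have hargBf : d2 θ φ δ n * Real.log (3 / d1 θ φ δ n) / Real.log (3 / d1 θ φ δ (n + 1))
          = Bf θ φ δ n := by rw [Bf, lr]; ring
      have hsplit : Real.sqrt (Dseq n) * Real.sqrt (Bf θ φ δ n) = sn :=
        (Real.sqrt_mul hDn.le _).symm
      have hfloor : Dseq (n+1) ≥ Dseq n * Real.sqrt (Dseq n) * Real.sqrt (Bf θ φ δ n) - 1 := by
        rw [hrec n hn, hargBf, sqrt32 hDn.le]
        have := Int.sub_one_lt_floor (Dseq n * Real.sqrt (Dseq n) * Real.sqrt (Bf θ φ δ n))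
        push_cast
        linarith
      have hX : Dseq n * Real.sqrt (Dseq n) * Real.sqrt (Bf θ φ δ n) = Dseq n * sn := by
        rw [← hsplit]; ring
      have hfloor' : Dseq (n+1) ≥ Dseq n * sn - 1 := by rw [hX] at hfloor; exact hfloor
      -- E_{n+1} ≥ E_n and invariant
      have hDs1 : 0 ≤ Dseq n * sn - 1 := by
        have h2 : Dseq n * 1 ≤ Dseq n * sn := mul_le_mul_of_nonneg_left hsn1.le hDn.le
        linarith
      have hEstep : Dseq (n+1) * Bf θ φ δ (n+1) ≥ φ * En * sn - d2 θ φ δ (n+1) := by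
        have s1 : Dseq (n+1) * Bf θ φ δ (n+1) ≥ (Dseq n * sn - 1) * Bf θ φ δ (n+1) := by
          exact mul_le_mul_of_nonneg_right hfloor' hBn1.le
        have s2 : (Dseq n * sn - 1) * Bf θ φ δ (n+1) ≥ (Dseq n * sn - 1) * (φ * Bf θ φ δ n) :=
          mul_le_mul_of_nonneg_left hBfs hDs1
        have s3 : (Dseq n * sn - 1) * (φ * Bf θ φ δ n) = φ * En * sn - φ * Bf θ φ δ n := by
          rw [hEn]; ring
        have s4 : φ * Bf θ φ δ n ≤ d2 θ φ δ (n+1) := by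
          rw [hd2n]; exact mul_le_mul_of_nonneg_left hBfd2 hφ0.le
        linarith
      set En1 := Dseq (n+1) * Bf θ φ δ (n+1) with hEn1
      have hEmono : En ≤ En1 := by
        have : φ * En * sn - En ≥ d2 θ φ δ (n+1) := ihG
        linarith
      have hE32 : 3/2 ≤ En1 := by linarith
      set sn1 := Real.sqrt En1 with hsn1d
      have hsn1gt : 1 < sn1 := by
        have h := Real.sqrt_lt_sqrt (by norm_num : (0:ℝ) ≤ 1) (by linarith : (1:ℝ) < En1)
        simpa using h
      have hsn1sq : sn1 ^ 2 = En1 := Real.sq_sqrt (by linarith)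
      have hsmono : sn ≤ sn1 := Real.sqrt_le_sqrt hEmono
      -- invariant at n+1
      have hGnew : φ * En1 * sn1 - En1 ≥ d2 θ φ δ (n+1+1) := by
        have k := key1b hEpos.le hEmono
        have k2 : φ * (En1 * sn1 - En * sn) ≥ φ * (sn * (En1 - En)) :=
          mul_le_mul_of_nonneg_left k hφ0.le
        have k3 : φ * (sn * (En1 - En)) ≥ 1 * (En1 - En) := by
          have h0 : (φ * sn - 1) * (En1 - En) ≥ 0 :=
            mul_nonneg (by linarith) (by linarith)
          have e : φ * (sn * (En1 - En)) - 1 * (En1 - En) = (φ * sn - 1) * (En1 - En) := by ring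
          linarith [h0, e]
        have k4 : d2 θ φ δ (n+1+1) ≤ d2 θ φ δ (n+1) := by
          rw [show n+1+1 = n+2 from rfl, hd2n2]
          have hd2pos' : 0 < d2 θ φ δ (n+1) := hd2pos
          linarith [mul_nonneg (by linarith : (0:ℝ) ≤ 1 - φ) hd2pos'.le]
        linarith [ihG, k2, k3, k4]
      -- epsilon facts
      set ε := 1 / (sn - 1) with hε
      set ε1 := 1 / (sn1 - 1) with hε1
      have hεpos : 0 < ε := by
        rw [hε]; exact div_pos one_pos (by linarith)
      have hε1pos : 0 < ε1 := by
        rw [hε1]; exact div_pos one_pos (by linarith)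
      have hεmono : ε1 ≤ ε := by
        rw [hε, hε1]
        exact one_div_le_one_div_of_le (by linarith) (by linarith)
      -- F bound
      set Ae := A ^ ((3/2:ℝ) ^ (n-1)) with hAe
      have hAe1 : 1 ≤ Ae := by
        rw [hAe, show (1:ℝ) = A ^ (0:ℝ) by rw [Real.rpow_zero]]
        exact Real.rpow_le_rpow_of_exponent_le hA1.le (by positivity)
      have hFn : Ae ≤ (Dseq n - ε) * (φ^2 * Bf θ φ δ n) := ihF
      have hDε : 0 < Dseq n - ε := by
        have hp : 0 < (Dseq n - ε) * (φ^2 * Bf θ φ δ n) := by linarith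
        rcases mul_pos_iff.mp hp with ⟨h, _⟩ | ⟨_, h⟩
        · exact h
        · have : 0 < φ^2 * Bf θ φ δ n := mul_pos (by positivity) hBn
          linarith
      have hDεle : Dseq n - ε ≤ Dseq n := by linarith
      -- key inequality
      have hk1 := key1 hDε.le hDεle
      have hk2 : Real.sqrt (Dseq n) * ε * Real.sqrt (Bf θ φ δ n) ≤
          (Dseq n * Real.sqrt (Dseq n) - (Dseq n - ε) * Real.sqrt (Dseq n - ε)) *
            Real.sqrt (Bf θ φ δ n) := by
        have := mul_le_mul_of_nonneg_right (by simpa using hk1 :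
          Real.sqrt (Dseq n) * ε ≤
            Dseq n * Real.sqrt (Dseq n) - (Dseq n - ε) * Real.sqrt (Dseq n - ε))
          (Real.sqrt_nonneg (Bf θ φ δ n))
        linarith
      have hse : sn * ε = 1 + ε := by
        have hne : sn - 1 ≠ 0 := ne_of_gt (by linarith)
        rw [hε]; field_simp; ring
      have hk3 : 1 + ε + (Dseq n - ε) * Real.sqrt (Dseq n - ε) * Real.sqrt (Bf θ φ δ n)
          ≤ Dseq n * sn := by
        have h5 : Real.sqrt (Dseq n) * ε * Real.sqrt (Bf θ φ δ n) = sn * ε := by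
          rw [← hsplit]; ring
        rw [h5, hse] at hk2
        have h6 : (Dseq n * Real.sqrt (Dseq n) - (Dseq n - ε) * Real.sqrt (Dseq n - ε)) *
            Real.sqrt (Bf θ φ δ n)
            = Dseq n * sn - (Dseq n - ε) * Real.sqrt (Dseq n - ε) * Real.sqrt (Bf θ φ δ n) := by
          rw [← hsplit]; ring
        rw [h6] at hk2
        linarith
      have hQ : 0 ≤ (Dseq n - ε) * Real.sqrt (Dseq n - ε) * Real.sqrt (Bf θ φ δ n) :=
        mul_nonneg (mul_nonneg hDε.le (Real.sqrt_nonneg _)) (Real.sqrt_nonneg _)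
      have hDfloorkey : (Dseq n - ε) * Real.sqrt (Dseq n - ε) * Real.sqrt (Bf θ φ δ n)
          ≤ Dseq (n+1) - ε1 := by
        have h9 : (Dseq n - ε) * Real.sqrt (Dseq n - ε) * Real.sqrt (Bf θ φ δ n)
            ≤ Dseq n * sn - 1 - ε1 := by linarith
        linarith
      -- chain for F
      have hT1 : ((Dseq n - ε) * Real.sqrt (Dseq n - ε) * Real.sqrt (Bf θ φ δ n)) *
          (φ^2 * Bf θ φ δ (n+1)) ≤ (Dseq (n+1) - ε1) * (φ^2 * Bf θ φ δ (n+1)) :=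
        mul_le_mul_of_nonneg_right hDfloorkey (by positivity)
      have hT2 : ((Dseq n - ε) * Real.sqrt (Dseq n - ε) * Real.sqrt (Bf θ φ δ n)) *
          (φ^2 * (φ * Bf θ φ δ n)) ≤
          ((Dseq n - ε) * Real.sqrt (Dseq n - ε) * Real.sqrt (Bf θ φ δ n)) *
          (φ^2 * Bf θ φ δ (n+1)) := by
        apply mul_le_mul_of_nonneg_left _ hQ
        exact mul_le_mul_of_nonneg_left hBfs (by positivity)
      -- identify F_n * sqrt F_n
      set Fn := (Dseq n - ε) * (φ^2 * Bf θ φ δ n) with hFndef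
      have hFnpos : 0 < Fn := mul_pos hDε (mul_pos (by positivity) hBn)
      have hFsqrt : Fn * Real.sqrt Fn =
          ((Dseq n - ε) * Real.sqrt (Dseq n - ε) * Real.sqrt (Bf θ φ δ n)) *
          (φ^2 * (φ * Bf θ φ δ n)) := by
        have r1 : Real.sqrt Fn = Real.sqrt (Dseq n - ε) * (φ * Real.sqrt (Bf θ φ δ n)) := by
          rw [hFndef, Real.sqrt_mul hDε.le, Real.sqrt_mul (by positivity : (0:ℝ) ≤ φ^2),
            Real.sqrt_sq hφ0.le]
        rw [r1, hFndef]; ring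
      -- monotonicity of x * sqrt x
      have hAeF : Ae * Real.sqrt Ae ≤ Fn * Real.sqrt Fn := by
        have h0 : (0:ℝ) ≤ Ae := by linarith
        have h1 : Real.sqrt Ae ≤ Real.sqrt Fn := Real.sqrt_le_sqrt hFn
        exact mul_le_mul hFn h1 (Real.sqrt_nonneg _) (by linarith)
      -- identify A^((3/2)^n)
      have hAepow : A ^ ((3/2:ℝ) ^ (n+1-1)) = Ae * Real.sqrt Ae := by
        have hexp : ((3/2:ℝ) ^ (n+1-1)) = ((3/2:ℝ) ^ (n-1)) * (3/2 : ℝ) := by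
          rw [show n+1-1 = (n-1)+1 from by omega, pow_succ]
        rw [hexp, Real.rpow_mul (by linarith : (0:ℝ) ≤ A), ← hAe,
          sqrt32 (by linarith : (0:ℝ) ≤ Ae)]
      refine ⟨?_, hGnew, hE32⟩
      rw [hAepow]
      calc Ae * Real.sqrt Ae ≤ Fn * Real.sqrt Fn := hAeF
        _ = ((Dseq n - ε) * Real.sqrt (Dseq n - ε) * Real.sqrt (Bf θ φ δ n)) *
            (φ^2 * (φ * Bf θ φ δ n)) := hFsqrt
        _ ≤ (Dseq (n+1) - ε1) * (φ^2 * Bf θ φ δ (n+1)) := le_trans hT2 hT1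
  -- conclude
  intro r hr
  obtain ⟨h1, h2, h3⟩ := key r hr
  have hBr : 0 < Bf θ φ δ r := Bf_pos hδ0 hδ1 hφ0 hφ1 hθ0 hθ1 hr
  have hcpos : 0 < (1 - θ) * (1 - φ) * φ ^ 2 * δ := by
    have : 0 < 1 - θ := by linarith
    have : 0 < 1 - φ := by linarith
    positivity
  have hble : φ^2 * Bf θ φ δ r ≤ (1 - θ) * (1 - φ) * φ ^ 2 * δ := by
    have := Bf_le hδ0 hδ1 hφ0 hφ1 hθ0 hθ1 hr
    have := d2_le hδ0 hφ0 hφ1 hθ0 hθ1 (δ := δ) r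
    have h7 : φ^2 * Bf θ φ δ r ≤ φ^2 * ((1 - θ) * (1 - φ) * δ) := by
      apply mul_le_mul_of_nonneg_left _ (by positivity)
      linarith
    nlinarith [h7]
  have hEr : 0 < Dseq r * Bf θ φ δ r := by linarith
  have hsr : 1 < Real.sqrt (Dseq r * Bf θ φ δ r) := by
    have h := Real.sqrt_lt_sqrt (by norm_num : (0:ℝ) ≤ 1) (by linarith : (1:ℝ) < Dseq r * Bf θ φ δ r)
    simpa using h
  have hεr : 0 ≤ 1 / (Real.sqrt (Dseq r * Bf θ φ δ r) - 1) :=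
    (div_pos one_pos (by linarith)).le
  have hApos : 0 < A ^ ((3/2:ℝ) ^ (r-1)) := Real.rpow_pos_of_pos (by linarith) _
  have hd1 : A ^ ((3/2:ℝ) ^ (r-1)) / (φ^2 * Bf θ φ δ r)
      ≤ Dseq r - 1 / (Real.sqrt (Dseq r * Bf θ φ δ r) - 1) := by
    rw [div_le_iff₀ (mul_pos (by positivity) hBr)]
    linarith
  have hd2' : A ^ ((3/2:ℝ) ^ (r-1)) / ((1 - θ) * (1 - φ) * φ ^ 2 * δ)
      ≤ A ^ ((3/2:ℝ) ^ (r-1)) / (φ^2 * Bf θ φ δ r) :=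
    div_le_div_of_nonneg_left hApos.le (by positivity) hble
  linarith
end

section
/- Let C₁ > 0, D ≥ 2 an integer, and let {D_r} be a non-decreasing sequence of positive integers with D₁ = D and D_{r+1} = ⌊ D_r^{3/2} √(δ_{r,2}·ln(3/δ_{r,1})/ln(3/δ_{r+1,1})) ⌋ where δ_{r,1} = θ(1−φ)φ^{r−1}δ and δ_{r,2} = (1−θ)(1−φ)φ^{r−1}δ for parameters 0 < δ, φ, θ < 1. Suppose real numbers g, h, h₁, L ≥ 0 satisfy g > (C₁D₁ + 1/D₁)·√(2 ln(3/δ_{1,1}))·h + L and h₁ ≤ h / √(D₁ δ_{1,2}). Then g > (C₁D₂ + 1/D₂)·√(2 ln(3/δ_{2,1}))·h₁ + L. -/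
theorem stmt_15 (δ φ θ : ℝ) (hδ0 : 0 < δ) (hδ1 : δ < 1) (hφ0 : 0 < φ) (hφ1 : φ < 1)
    (hθ0 : 0 < θ) (hθ1 : θ < 1) (C₁ : ℝ) (hC₁ : 0 < C₁) (D : ℕ) (hD : 2 ≤ D)
    (Dseq : ℕ → ℝ) (hDpos : ∀ r : ℕ, 1 ≤ r → 0 < Dseq r)
    (hDint : ∀ r : ℕ, 1 ≤ r → ∃ k : ℤ, Dseq r = k)
    (hmono : ∀ r : ℕ, 1 ≤ r → Dseq r ≤ Dseq (r + 1))
    (hD1 : Dseq 1 = D)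
    (hrec : ∀ r : ℕ, 1 ≤ r → Dseq (r + 1) = (⌊Dseq r ^ (3 / 2 : ℝ) *
      Real.sqrt (d2 θ φ δ r * Real.log (3 / d1 θ φ δ r) /
        Real.log (3 / d1 θ φ δ (r + 1)))⌋ : ℤ))
    (g h h₁ L : ℝ) (hg : 0 ≤ g) (hh : 0 ≤ h) (hh₁ : 0 ≤ h₁) (hL : 0 ≤ L)
    (hgap : g > (C₁ * Dseq 1 + 1 / Dseq 1) * Real.sqrt (2 * Real.log (3 / d1 θ φ δ 1)) * h + L)
    (hshrink : h₁ ≤ h / Real.sqrt (Dseq 1 * d2 θ φ δ 1)) :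
    g > (C₁ * Dseq 2 + 1 / Dseq 2) * Real.sqrt (2 * Real.log (3 / d1 θ φ δ 2)) * h₁ + L := by
  have h1φ : (0:ℝ) < 1 - φ := by linarith
  have h1θ : (0:ℝ) < 1 - θ := by linarith
  have hae : d1 θ φ δ 1 = θ * (1 - φ) * δ := by simp [d1]
  have hbe : d1 θ φ δ 2 = θ * (1 - φ) * φ * δ := by simp [d1]
  have hce : d2 θ φ δ 1 = (1 - θ) * (1 - φ) * δ := by simp [d2]
  have hapos : 0 < d1 θ φ δ 1 := by rw [hae]; exact mul_pos (mul_pos hθ0 h1φ) hδ0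
  have hbpos : 0 < d1 θ φ δ 2 := by rw [hbe]; exact mul_pos (mul_pos (mul_pos hθ0 h1φ) hφ0) hδ0
  have hcpos : 0 < d2 θ φ δ 1 := by rw [hce]; exact mul_pos (mul_pos h1θ h1φ) hδ0
  have halt : d1 θ φ δ 1 < 1 := by rw [hae]; nlinarith
  have hblt : d1 θ φ δ 2 < 1 := by rw [hbe]; nlinarith
  have hrec1 := hrec 1 le_rfl
  norm_num at hrec1
  set c := d2 θ φ δ 1 with hc_def
  set L1 := Real.log (3 / d1 θ φ δ 1) with hL1_def
  set L2 := Real.log (3 / d1 θ φ δ 2) with hL2_def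
  set D1 := Dseq 1 with hD1_def
  set D2 := Dseq 2 with hD2_def
  have hL1 : 0 < L1 := Real.log_pos (by rw [lt_div_iff₀ hapos]; linarith)
  have hL2 : 0 < L2 := Real.log_pos (by rw [lt_div_iff₀ hbpos]; linarith)
  have hD1pos : 0 < D1 := hDpos 1 le_rfl
  have hD2pos : 0 < D2 := hDpos 2 (by norm_num)
  have hle : D1 ≤ D2 := hmono 1 le_rfl
  have hfloor : D2 ≤ D1 ^ ((3:ℝ)/2) * Real.sqrt (c * L1 / L2) := by
    rw [hrec1]; exact Int.floor_le _
  set s := Real.sqrt (c * L1 / L2) with hs_def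
  have hL2ne : L2 ≠ 0 := ne_of_gt hL2
  have hsprod : s * Real.sqrt (2 * L2) = Real.sqrt (2 * c * L1) := by
    rw [hs_def, ← Real.sqrt_mul (div_nonneg (mul_nonneg hcpos.le hL1.le) hL2.le)]
    congr 1
    field_simp
  have hrpow : D1 ^ ((3:ℝ)/2) = D1 * Real.sqrt D1 := by
    rw [show ((3:ℝ)/2) = 1 + 1/2 by norm_num, Real.rpow_add hD1pos, Real.rpow_one,
      ← Real.sqrt_eq_rpow]
  have hmul1 : Real.sqrt D1 * Real.sqrt (2 * c * L1) = Real.sqrt (2 * L1) * Real.sqrt (D1 * c) := by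
    rw [← Real.sqrt_mul hD1pos.le, ← Real.sqrt_mul (by positivity : (0:ℝ) ≤ 2 * L1)]
    congr 1
    ring
  have hi : D2 * Real.sqrt (2 * L2) ≤ D1 * (Real.sqrt (2 * L1) * Real.sqrt (D1 * c)) := by
    calc D2 * Real.sqrt (2 * L2) ≤ (D1 ^ ((3:ℝ)/2) * s) * Real.sqrt (2 * L2) :=
          mul_le_mul_of_nonneg_right hfloor (Real.sqrt_nonneg _)
      _ = D1 * (Real.sqrt (2 * L1) * Real.sqrt (D1 * c)) := by
          rw [hrpow, mul_assoc, hsprod, mul_assoc, hmul1]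
  have hone : 1 ≤ Real.sqrt D1 * s := by
    have h2 : D1 * 1 ≤ D1 * (Real.sqrt D1 * s) := by
      have : D1 ≤ D1 ^ ((3:ℝ)/2) * s := le_trans hle hfloor
      rw [hrpow] at this
      rw [mul_one]; linarith [this, (mul_assoc D1 (Real.sqrt D1) s)]
    exact le_of_mul_le_mul_left h2 hD1pos
  have hs2 : Real.sqrt (2 * L2) ≤ Real.sqrt (2 * L1) * Real.sqrt (D1 * c) := by
    calc Real.sqrt (2 * L2) = 1 * Real.sqrt (2 * L2) := (one_mul _).symm
      _ ≤ (Real.sqrt D1 * s) * Real.sqrt (2 * L2) :=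
          mul_le_mul_of_nonneg_right hone (Real.sqrt_nonneg _)
      _ = Real.sqrt (2 * L1) * Real.sqrt (D1 * c) := by rw [mul_assoc, hsprod, hmul1]
  have hii : (1 / D2) * Real.sqrt (2 * L2) ≤ (1 / D1) * (Real.sqrt (2 * L1) * Real.sqrt (D1 * c)) := by
    calc (1 / D2) * Real.sqrt (2 * L2) ≤ (1 / D1) * Real.sqrt (2 * L2) :=
          mul_le_mul_of_nonneg_right (one_div_le_one_div_of_le hD1pos hle) (Real.sqrt_nonneg _)
      _ ≤ (1 / D1) * (Real.sqrt (2 * L1) * Real.sqrt (D1 * c)) :=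
          mul_le_mul_of_nonneg_left hs2 (by positivity)
  have key : (C₁ * D2 + 1 / D2) * Real.sqrt (2 * L2) ≤
      (C₁ * D1 + 1 / D1) * Real.sqrt (2 * L1) * Real.sqrt (D1 * c) := by
    have hi' := mul_le_mul_of_nonneg_left hi hC₁.le
    linarith [hi', hii]
  have hsq : 0 < Real.sqrt (D1 * c) := Real.sqrt_pos.mpr (mul_pos hD1pos hcpos)
  have hcoef : 0 ≤ (C₁ * D2 + 1 / D2) * Real.sqrt (2 * L2) :=
    mul_nonneg (add_nonneg (mul_nonneg hC₁.le hD2pos.le) (one_div_nonneg.mpr hD2pos.le))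
      (Real.sqrt_nonneg _)
  have hfin : (C₁ * D2 + 1 / D2) * Real.sqrt (2 * L2) * h₁ ≤
      (C₁ * D1 + 1 / D1) * Real.sqrt (2 * L1) * h := by
    calc (C₁ * D2 + 1 / D2) * Real.sqrt (2 * L2) * h₁
        ≤ (C₁ * D2 + 1 / D2) * Real.sqrt (2 * L2) * (h / Real.sqrt (D1 * c)) :=
          mul_le_mul_of_nonneg_left hshrink hcoef
      _ ≤ ((C₁ * D1 + 1 / D1) * Real.sqrt (2 * L1) * Real.sqrt (D1 * c)) * (h / Real.sqrt (D1 * c)) :=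
          mul_le_mul_of_nonneg_right key (div_nonneg hh hsq.le)
      _ = (C₁ * D1 + 1 / D1) * Real.sqrt (2 * L1) * h := by
          field_simp
  linarith [hgap, hfin]
end
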